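/- Let Z be a finite nonempty set, c : Z × Z → ℝ a cost function, and p, q ∈ Δ(Z). If the diagonal D = {(z,z) : z ∈ Z} is c-cyclically monotone, then there exists a c-optimal coupling γ of p and q such that 1 − Σ_{z∈Z} γ(z,z) ≤ (|Z| − 1)·‖q − p‖. -/

import Mathlib

open Finset

/-- `p` is a probability vector on the finite set `Z`. -/
def IsProbVec {Z : Type*} [Fintype Z] (p : Z → ℝ) : Prop :=
  (∀ z, 0 ≤ p z) ∧ ∑ z, p z = 1

/-- Total variation distance `‖p − q‖ = (1/2)·Σ_z |p z − q z|`. -/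
noncomputable def tv {Z : Type*} [Fintype Z] (p q : Z → ℝ) : ℝ :=
  (∑ z, |p z - q z|) / 2

/-- `γ` is a coupling of `p` and `q`. -/
def IsCoupling {X Y : Type*} [Fintype X] [Fintype Y]
    (γ : X → Y → ℝ) (p : X → ℝ) (q : Y → ℝ) : Prop :=
  (∀ x y, 0 ≤ γ x y) ∧ (∀ x, ∑ y, γ x y = p x) ∧ (∀ y, ∑ x, γ x y = q y)

/-- Total transport cost of `γ` under the cost function `c`. -/
noncomputable def transportCost {X Y : Type*} [Fintype X] [Fintype Y]
    (c : X → Y → ℝ) (γ : X → Y → ℝ) : ℝ :=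
  ∑ x, ∑ y, c x y * γ x y

/-- `γ` is a `c`-optimal coupling of `p` and `q`. -/
def IsOptimalCoupling {X Y : Type*} [Fintype X] [Fintype Y]
    (c : X → Y → ℝ) (γ : X → Y → ℝ) (p : X → ℝ) (q : Y → ℝ) : Prop :=
  IsCoupling γ p q ∧
    ∀ γ' : X → Y → ℝ, IsCoupling γ' p q → transportCost c γ ≤ transportCost c γ'

/-- The set `S ⊆ Z × Z` is `c`-cyclically monotone. -/
def CyclMono {Z : Type*} (c : Z → Z → ℝ) (S : Set (Z × Z)) : Prop :=
  ∀ J : ℕ, ∀ z z' : Fin (J + 2) → Z, (∀ j, (z j, z' j) ∈ S) →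
    ∑ j, c (z j) (z' j) ≤ ∑ j, c (z j) (z' (j + 1))

/-!
Among the `c`-optimal couplings, which form a compact set, pick `γ` with the largest mass on
the diagonal. If the off-diagonal support of `γ` contained a cycle `w₀ → w₁ → ⋯ → w₀`, moving a
little mass from the edges `(wᵢ, wᵢ₊₁)` to the diagonal points `(wᵢ, wᵢ)` would keep the
marginals, would not increase the cost (cyclic monotonicity of the diagonal) and would increase
the diagonal mass. Hence that support is acyclic and carries a potential
`f : Z → {0, …, |Z| - 1}` increasing strictly along it, so the mass moved is at most
`∑ γ(x, y) (f y - f x) = ∑ f (q - p) ≤ (|Z| - 1)‖q - p‖`.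
-/

namespace Relation.TransGen

variable {α : Type*} {r : α → α → Prop}

theorem exists_fin_walk {a b : α} (h : TransGen r a b) :
    ∃ (n : ℕ) (w : Fin (n + 2) → α), w 0 = a ∧ w (Fin.last _) = b ∧
      ∀ i : Fin (n + 1), r (w i.castSucc) (w i.succ) := by
  induction h with
  | single hab => exact ⟨0, ![a, _], rfl, rfl, fun i => by fin_cases i; exact hab⟩
  | tail _ hbc ih =>
    obtain ⟨n, w, h0, hlast, hw⟩ := ih
    refine ⟨n + 1, Fin.snoc w _, by rw [← Fin.castSucc_zero, Fin.snoc_castSucc, h0],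
      Fin.snoc_last _ _, fun i => ?_⟩
    induction i using Fin.lastCases with
    | last => rwa [Fin.succ_last, Fin.snoc_last, Fin.snoc_castSucc, hlast]
    | cast i => rw [Fin.succ_castSucc, Fin.snoc_castSucc, Fin.snoc_castSucc]; exact hw i

theorem exists_cycle (hirr : ∀ x, ¬ r x x) {a : α} (h : TransGen r a a) :
    ∃ (n : ℕ) (w : Fin (n + 2) → α), ∀ i, r (w i) (w (i + 1)) := by
  obtain ⟨n, w, h0, hlast, hw⟩ := h.exists_fin_walk
  cases n with
  | zero => exact absurd (by simpa [h0, ← hlast] using hw 0) (hirr a)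
  | succ n =>
    refine ⟨n, w ∘ Fin.castSucc, fun i => ?_⟩
    induction i using Fin.lastCases with
    | last =>
      have := hw (Fin.last _)
      rw [Fin.succ_last, hlast, ← h0] at this
      rwa [Function.comp_apply, Function.comp_apply, Fin.last_add_one, Fin.castSucc_zero]
    | cast i =>
      have := hw i.castSucc
      rw [Fin.succ_castSucc] at this
      rwa [Function.comp_apply, Function.comp_apply, Fin.coeSucc_eq_succ]

end Relation.TransGen

theorem exists_nat_potential_of_acyclic {α : Type*} [Fintype α] {r : α → α → Prop}
    (h : ∀ x, ¬ Relation.TransGen r x x) :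
    ∃ f : α → ℕ, (∀ x y, r x y → f x < f y) ∧ ∀ x, f x < Fintype.card α := by
  classical
  refine ⟨fun x => #{z | Relation.TransGen r z x}, fun x y hxy => card_lt_card ?_,
    fun x => card_lt_univ_of_notMem (x := x) (by simpa using h x)⟩
  refine (ssubset_iff_of_subset fun z hz => ?_).2 ⟨x, ?_, ?_⟩
  · simp only [mem_filter, mem_univ, true_and] at hz ⊢
    exact hz.tail hxy
  · simpa using Relation.TransGen.single hxy
  · simpa using h x

theorem tv_eq_sum_posPart {Z : Type*} [Fintype Z] {p q : Z → ℝ}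
    (hpq : ∑ z, p z = ∑ z, q z) : tv q p = ∑ z, (q z - p z)⁺ := by
  have hsum : ∑ z, (q z - p z) = 0 := by rw [sum_sub_distrib, hpq, sub_self]
  have habs (z : Z) : |q z - p z| = 2 * (q z - p z)⁺ - (q z - p z) := by
    linarith [posPart_add_negPart (q z - p z), posPart_sub_negPart (q z - p z)]
  rw [tv, sum_congr rfl fun z _ => habs z, sum_sub_distrib, hsum, ← mul_sum]
  ring

theorem sum_mul_sub_le_mul_tv {Z : Type*} [Fintype Z] {p q f : Z → ℝ} {M : ℝ}
    (hpq : ∑ z, p z = ∑ z, q z) (hf₀ : ∀ z, 0 ≤ f z) (hfM : ∀ z, f z ≤ M) :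
    ∑ z, f z * (q z - p z) ≤ M * tv q p := by
  rw [tv_eq_sum_posPart hpq, mul_sum]
  refine sum_le_sum fun z _ => ?_
  calc f z * (q z - p z) ≤ f z * (q z - p z)⁺ := by gcongr; exacts [hf₀ z, le_posPart _]
    _ ≤ M * (q z - p z)⁺ := by gcongr; exact hfM z

section Coupling

variable {X Y : Type*} [Fintype X] [Fintype Y]

theorem isCompact_setOf_isCoupling (p : X → ℝ) (q : Y → ℝ) :
    IsCompact {γ : X → Y → ℝ | IsCoupling γ p q} := by
  have hclosed : IsClosed {γ : X → Y → ℝ | IsCoupling γ p q} := by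
    simp only [IsCoupling, Set.ofPred_and, Set.ofPred_forall]
    refine .inter (isClosed_iInter fun x => isClosed_iInter fun y =>
      isClosed_le continuous_const (by fun_prop)) (.inter ?_ ?_)
    · exact isClosed_iInter fun x => isClosed_eq (by fun_prop) continuous_const
    · exact isClosed_iInter fun y => isClosed_eq (by fun_prop) continuous_const
  refine (isCompact_Icc (a := 0) (b := fun x _ => p x)).of_isClosed_subset hclosed
    fun γ hγ => ⟨fun x y => hγ.1 x y, fun x y => ?_⟩
  calc γ x y ≤ ∑ y', γ x y' := single_le_sum (fun y' _ => hγ.1 x y') (mem_univ y)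
    _ = p x := hγ.2.1 x

theorem isCoupling_mul {p : X → ℝ} {q : Y → ℝ} (hp : IsProbVec p) (hq : IsProbVec q) :
    IsCoupling (fun x y => p x * q y) p q :=
  ⟨fun x y => mul_nonneg (hp.1 x) (hq.1 y), fun x => by rw [← mul_sum, hq.2, mul_one],
    fun y => by rw [← sum_mul, hp.2, one_mul]⟩

theorem continuous_transportCost (c : X → Y → ℝ) : Continuous (transportCost c) := by
  unfold transportCost; fun_prop

end Coupling

theorem IsCompact.exists_isMinOn_isMaxOn_of_le {α : Type*} [TopologicalSpace α] {s : Set α}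
    (hs : IsCompact s) (hne : s.Nonempty) {f g : α → ℝ} (hf : Continuous f)
    (hg : Continuous g) :
    ∃ x ∈ s, IsMinOn f s x ∧ ∀ y ∈ s, f y ≤ f x → g y ≤ g x := by
  obtain ⟨x₀, hx₀, hmin⟩ := hs.exists_isMinOn hne hf.continuousOn
  have hT : IsCompact (s ∩ {y | f y ≤ f x₀}) := hs.inter_right (isClosed_le hf continuous_const)
  obtain ⟨x, ⟨hxs, hxf⟩, hmax⟩ := hT.exists_isMaxOn ⟨x₀, hx₀, le_refl (f x₀)⟩ hg.continuousOn
  exact ⟨x, hxs, fun y hy => show f x ≤ f y from hxf.trans (hmin hy),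
    fun y hy hyx => hmax ⟨hy, hyx.trans hxf⟩⟩

theorem exists_isOptimalCoupling_forall_sum_diag_le {Z : Type*} [Fintype Z] (c : Z → Z → ℝ)
    {p q : Z → ℝ} (hp : IsProbVec p) (hq : IsProbVec q) :
    ∃ γ, IsOptimalCoupling c γ p q ∧
      ∀ γ', IsOptimalCoupling c γ' p q → ∑ z, γ' z z ≤ ∑ z, γ z z := by
  obtain ⟨γ, hγ, hmin, hmax⟩ := (isCompact_setOf_isCoupling p q).exists_isMinOn_isMaxOn_of_le
    ⟨_, isCoupling_mul hp hq⟩ (continuous_transportCost c) (g := fun γ => ∑ z, γ z z)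
    (by fun_prop)
  exact ⟨γ, ⟨hγ, fun γ' hγ' => hmin hγ'⟩, fun γ' hγ' => hmax γ' hγ'.1 (hγ'.2 γ hγ)⟩

section PairCount

variable {ι X Y : Type*} [Fintype ι] [DecidableEq X] [DecidableEq Y]

def pairCount (u : ι → X) (v : ι → Y) (x : X) (y : Y) : ℝ :=
  ∑ i, if u i = x ∧ v i = y then 1 else 0

theorem pairCount_nonneg (u : ι → X) (v : ι → Y) (x : X) (y : Y) : 0 ≤ pairCount u v x y :=
  sum_nonneg fun _ _ => by split_ifs <;> norm_num

theorem sum_pairCount_right [Fintype Y] (u : ι → X) (v : ι → Y) (x : X) :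
    ∑ y, pairCount u v x y = ∑ i, if u i = x then 1 else 0 := by
  simp only [pairCount]
  rw [sum_comm]
  simp [ite_and]

theorem sum_pairCount_left [Fintype X] (u : ι → X) (v : ι → Y) (y : Y) :
    ∑ x, pairCount u v x y = ∑ i, if v i = y then 1 else 0 := by
  simp only [pairCount]
  rw [sum_comm]
  simp [ite_and]

theorem transportCost_pairCount [Fintype X] [Fintype Y] (c : X → Y → ℝ) (u : ι → X)
    (v : ι → Y) : transportCost c (pairCount u v) = ∑ i, c (u i) (v i) := by
  simp only [transportCost, pairCount, mul_sum]
  rw [sum_comm]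
  refine (sum_congr rfl fun y _ => sum_comm).trans ?_
  rw [sum_comm]
  simp [ite_and]

theorem sum_pairCount_diag [Fintype X] (u v : ι → X) :
    ∑ x, pairCount u v x x = ∑ i, if u i = v i then 1 else 0 := by
  simp only [pairCount]
  rw [sum_comm]
  simp [ite_and, eq_comm]

end PairCount

section Perturbation

variable {X Y : Type*} [Fintype X] [Fintype Y]

theorem IsCoupling.add_mul_sub {γ P Q : X → Y → ℝ} {p : X → ℝ} {q : Y → ℝ} (ε : ℝ)
    (hγ : IsCoupling γ p q) (hrow : ∀ x, ∑ y, P x y = ∑ y, Q x y)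
    (hcol : ∀ y, ∑ x, P x y = ∑ x, Q x y) (hnonneg : ∀ x y, 0 ≤ γ x y + ε * (P x y - Q x y)) :
    IsCoupling (fun x y => γ x y + ε * (P x y - Q x y)) p q :=
  ⟨hnonneg,
    fun x => by simp only [sum_add_distrib, ← mul_sum, sum_sub_distrib, hrow, sub_self,
      mul_zero, add_zero, hγ.2.1],
    fun y => by simp only [sum_add_distrib, ← mul_sum, sum_sub_distrib, hcol, sub_self,
      mul_zero, add_zero, hγ.2.2]⟩

theorem transportCost_add_mul_sub (c : X → Y → ℝ) (γ P Q : X → Y → ℝ) (ε : ℝ) :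
    transportCost c (fun x y => γ x y + ε * (P x y - Q x y)) =
      transportCost c γ + ε * (transportCost c P - transportCost c Q) := by
  simp only [transportCost, mul_add, mul_sub, mul_left_comm _ ε, sum_add_distrib,
    sum_sub_distrib, ← mul_sum]

end Perturbation

section Cycle

variable {Z : Type*} [Fintype Z] [DecidableEq Z] {c : Z → Z → ℝ} {γ : Z → Z → ℝ}
  {p q : Z → ℝ}

theorem IsCoupling.exists_cost_le_sum_diag_lt_of_cycle (hγ : IsCoupling γ p q)
    (hc : CyclMono c {zz : Z × Z | zz.1 = zz.2}) {n : ℕ} (w : Fin (n + 2) → Z)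
    (hw : ∀ i, w i ≠ w (i + 1) ∧ 0 < γ (w i) (w (i + 1))) :
    ∃ γ', IsCoupling γ' p q ∧ transportCost c γ' ≤ transportCost c γ ∧
      ∑ z, γ z z < ∑ z, γ' z z := by
  set w' : Fin (n + 2) → Z := fun i => w (i + 1)
  set m := univ.inf' univ_nonempty fun i => γ (w i) (w' i)
  have hm : 0 < m := (lt_inf'_iff _).2 fun i _ => (hw i).2
  -- the cycle may run through an edge up to `n + 2` times
  set ε := m / (n + 2)
  have hε : 0 < ε := by positivity
  have hcap (x y : Z) : ε * pairCount w w' x y ≤ γ x y := by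
    rw [pairCount, mul_sum]
    calc ∑ i, ε * (if w i = x ∧ w' i = y then 1 else 0)
      _ ≤ ∑ _i : Fin (n + 2), γ x y / (n + 2) := by
          refine sum_le_sum fun i _ => ?_
          split_ifs with h
          · rw [mul_one, ← h.1, ← h.2]
            exact div_le_div_of_nonneg_right (inf'_le _ (mem_univ i)) (by positivity)
          · rw [mul_zero]; exact div_nonneg (hγ.1 x y) (by positivity)
      _ = γ x y := by
          simp only [sum_const, card_univ, Fintype.card_fin, nsmul_eq_mul, Nat.cast_add,
            Nat.cast_ofNat]
          field_simp
  refine ⟨_, hγ.add_mul_sub ε (P := pairCount w w) (Q := pairCount w w')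
    (fun x => by rw [sum_pairCount_right, sum_pairCount_right])
    (fun y => by
      rw [sum_pairCount_left, sum_pairCount_left]
      exact (Fintype.sum_equiv (Equiv.addRight 1) _ _ fun _ => rfl).symm)
    (fun x y => by nlinarith [hcap x y, pairCount_nonneg w w x y]), ?_, ?_⟩
  · rw [transportCost_add_mul_sub, transportCost_pairCount, transportCost_pairCount]
    nlinarith [hc n w w fun _ => rfl]
  · have hoff : ∑ i, (if w i = w' i then (1 : ℝ) else 0) = 0 :=
      sum_eq_zero fun i _ => if_neg (hw i).1
    simp only [sum_add_distrib, ← mul_sum, sum_sub_distrib, sum_pairCount_diag, hoff,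
      if_pos, sum_const, card_univ, Fintype.card_fin, nsmul_eq_mul, mul_one, sub_zero]
    exact lt_add_of_pos_right _ (by positivity)

end Cycle

theorem IsOptimalCoupling.not_transGen_self_of_forall_sum_diag_le {Z : Type*} [Fintype Z]
    {c γ : Z → Z → ℝ} {p q : Z → ℝ} (hc : CyclMono c {zz : Z × Z | zz.1 = zz.2})
    (hopt : IsOptimalCoupling c γ p q)
    (hmax : ∀ γ', IsOptimalCoupling c γ' p q → ∑ z, γ' z z ≤ ∑ z, γ z z) (x : Z) :
    ¬ Relation.TransGen (fun x y => x ≠ y ∧ 0 < γ x y) x x := by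
  classical
  intro hx
  obtain ⟨n, w, hw⟩ := hx.exists_cycle fun z hz => hz.1 rfl
  obtain ⟨γ', hγ', hcost, hdiag⟩ := hopt.1.exists_cost_le_sum_diag_lt_of_cycle hc w hw
  exact (hmax γ' ⟨hγ', fun γ'' hγ'' => hcost.trans (hopt.2 γ'' hγ'')⟩).not_gt hdiag

section MassMoved

variable {Z : Type*} [Fintype Z] {γ : Z → Z → ℝ} {p q : Z → ℝ}

theorem IsCoupling.sum_sum_mul_sub (hγ : IsCoupling γ p q) (f : Z → ℝ) :
    ∑ x, ∑ y, γ x y * (f y - f x) = ∑ z, f z * (q z - p z) := by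
  have hq : ∑ x, ∑ y, γ x y * f y = ∑ y, f y * q y := by
    rw [sum_comm]; simp only [← sum_mul, hγ.2.2, mul_comm]
  have hp : ∑ x, ∑ y, γ x y * f x = ∑ x, f x * p x := by
    simp only [← sum_mul, hγ.2.1, mul_comm]
  simp only [mul_sub, sum_sub_distrib, hq, hp]

theorem IsCoupling.one_sub_sum_diag_le (hγ : IsCoupling γ p q) (hp : ∑ z, p z = 1)
    {f : Z → ℝ} (hf : ∀ x y, x ≠ y → 0 < γ x y → f x + 1 ≤ f y) :
    1 - ∑ z, γ z z ≤ ∑ z, f z * (q z - p z) := by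
  classical
  calc 1 - ∑ z, γ z z = ∑ x, ∑ y ∈ univ.erase x, γ x y := by
        rw [← hp, ← sum_sub_distrib]
        refine sum_congr rfl fun x _ => ?_
        rw [← hγ.2.1 x, ← add_sum_erase _ _ (mem_univ x), add_sub_cancel_left]
    _ ≤ ∑ x, ∑ y ∈ univ.erase x, γ x y * (f y - f x) := by
        gcongr with x _ y hy
        rcases (hγ.1 x y).eq_or_lt with h | h
        · rw [← h, zero_mul]
        · have := hf x y (ne_of_mem_erase hy).symm h
          nlinarith
    _ = ∑ x, ∑ y, γ x y * (f y - f x) := by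
        refine sum_congr rfl fun x _ => sum_erase _ ?_
        rw [sub_self, mul_zero]
    _ = ∑ z, f z * (q z - p z) := hγ.sum_sum_mul_sub f

end MassMoved

theorem mass_moved_bound {Z : Type*} [Fintype Z]
    (c : Z → Z → ℝ) (p q : Z → ℝ) (hp : IsProbVec p) (hq : IsProbVec q)
    (hdiag : CyclMono c {zz : Z × Z | zz.1 = zz.2}) :
    ∃ γ : Z → Z → ℝ, IsOptimalCoupling c γ p q ∧
      1 - ∑ z, γ z z ≤ ((Fintype.card Z : ℝ) - 1) * tv q p := by
  obtain ⟨γ, hopt, hmax⟩ := exists_isOptimalCoupling_forall_sum_diag_le c hp hq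
  obtain ⟨f, hf, hf_lt⟩ := exists_nat_potential_of_acyclic
    (hopt.not_transGen_self_of_forall_sum_diag_le hdiag hmax)
  refine ⟨γ, hopt, ?_⟩
  calc 1 - ∑ z, γ z z ≤ ∑ z, (f z : ℝ) * (q z - p z) :=
        hopt.1.one_sub_sum_diag_le hp.2 fun x y hxy hγ => by
          exact_mod_cast hf x y ⟨hxy, hγ⟩
    _ ≤ ((Fintype.card Z : ℝ) - 1) * tv q p :=
        sum_mul_sub_le_mul_tv (hp.2.trans hq.2.symm) (fun z => Nat.cast_nonneg _) fun z => by
          rw [le_sub_iff_add_le]; exact_mod_cast hf_lt z
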